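/- Let B be a C*-algebra and let t : Z → W be a surjective B-linear isometry between right Hilbert C*-modules over B. Then t is unitary: it is adjointable with adjoint t⁻¹, and ⟨t(z₁) | t(z₂)⟩ = ⟨z₁ | z₂⟩ for all z₁, z₂ ∈ Z. -/

import Mathlib

/-!
Comparing positive elements by norms of conjugates (Lance): if `0 ≤ a, b` in a C*-algebra and
`‖c⋆ a c‖ ≤ ‖c⋆ b c‖` for all `c`, then `a ≤ b`. Indeed, with `β = b + ε` and `c = β^(-1/2)`,
the element `q = c a c` satisfies `‖q‖⁴ ≤ ‖q³‖ ‖q‖ ≤ ‖q (c b c) q‖ ‖q‖ ≤ ‖q‖³`, since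
`q³ = (c q)⋆ a (c q)` and `c b c ≤ 1`; so `‖q‖ ≤ 1`, i.e. `a ≤ b + ε`.
For a module isometry `t`, `‖c⋆ ⟨t z, t z⟩ c‖ = ‖t (z c)‖² = ‖z c‖² = ‖c⋆ ⟨z, z⟩ c‖`, so
`⟨t z, t z⟩ = ⟨z, z⟩`, and polarization gives `⟨t x, t y⟩ = ⟨x, y⟩`. Then `t` is injective,
and its inverse is its adjoint.
-/

open scoped RightActions

/-- The December 2024 Mathlib `CStarModule` (right `Aᵐᵒᵖ`-action, inner product `A`-linear on
the right in the second argument); Mathlib's `CStarModule` now uses a left action instead. -/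
class RightCStarModule (A E : Type*) [NonUnitalSemiring A] [StarRing A] [Module ℂ A]
    [AddCommGroup E] [Module ℂ E] [PartialOrder A] [SMul Aᵐᵒᵖ E] [Norm A] [Norm E]
    extends Inner A E where
  inner_add_right {x} {y} {z} : inner x (y + z) = inner x y + inner x z
  inner_self_nonneg {x} : 0 ≤ inner x x
  inner_self {x} : inner x x = 0 ↔ x = 0
  inner_op_smul_right {a : A} {x y : E} : inner x (y <• a) = inner x y * a
  inner_smul_right_complex {z : ℂ} {x} {y} : inner x (z • y) = z • inner x y
  star_inner x y : star (inner x y) = inner y x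
  norm_eq_sqrt_norm_inner_self x : ‖x‖ = √‖inner x x‖

section CStarAlgebra

open Filter Topology CFC

lemma IsSelfAdjoint.norm_le_one_of_norm_mul_self_mul_self_le {A : Type*} [NormedRing A]
    [StarRing A] [CStarRing A] {p q : A} (hq : IsSelfAdjoint q) (hp : ‖p‖ ≤ 1)
    (h : ‖q * q * q‖ ≤ ‖q * p * q‖) : ‖q‖ ≤ 1 := by
  have hq4 : ‖q‖ ^ 4 ≤ ‖q‖ ^ 3 :=
    calc ‖q‖ ^ 4 = ‖q ^ 4‖ := (hq.norm_pow_two_pow 2).symm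
      _ = ‖q * q * q * q‖ := by rw [pow_succ, pow_succ, pow_succ, pow_one]
      _ ≤ ‖q * q * q‖ * ‖q‖ := norm_mul_le _ _
      _ ≤ ‖q * p * q‖ * ‖q‖ := by gcongr
      _ ≤ ‖q‖ * ‖p‖ * ‖q‖ * ‖q‖ := by gcongr; exact norm_mul₃_le
      _ ≤ ‖q‖ * 1 * ‖q‖ * ‖q‖ := by gcongr
      _ = ‖q‖ ^ 3 := by ring
  by_contra! hlt
  nlinarith [pow_pos (zero_lt_one.trans hlt) 3]

variable {A : Type*} [CStarAlgebra A] [PartialOrder A] [StarOrderedRing A]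

lemma le_iff_norm_rpow_mul_mul_rpow {a b : A} (ha : 0 ≤ a) (hb : IsStrictlyPositive b) :
    a ≤ b ↔ ‖b ^ (-(1 / 2) : ℝ) * a * b ^ (-(1 / 2) : ℝ)‖ ≤ 1 := by
  rw [le_iff_norm_sqrt_mul_rpow a b, ← sq_le_one_iff₀ (norm_nonneg _), sq,
    ← CStarRing.norm_star_mul_self, star_mul, (IsSelfAdjoint.of_nonneg (sqrt_nonneg a)).star_eq,
    (IsSelfAdjoint.of_nonneg rpow_nonneg).star_eq, ← mul_assoc, mul_assoc _ _ (sqrt a),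
    sqrt_mul_sqrt_self a]

lemma le_of_forall_pos_le_add_algebraMap {a b : A}
    (h : ∀ ε : ℝ, 0 < ε → a ≤ b + algebraMap ℝ A ε) : a ≤ b := by
  have hlim : Tendsto (fun ε : ℝ => b + algebraMap ℝ A ε) (𝓝[>] 0) (𝓝 b) := by
    simpa using (tendsto_const_nhds.add ((continuous_algebraMap ℝ A).tendsto 0)).mono_left
      nhdsWithin_le_nhds
  exact ge_of_tendsto hlim (eventually_nhdsWithin_of_forall h)

variable {a b : A}

/-- Conjugation only by elements of the ideal generated by `a` is assumed, so that the lemma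
applies in the unitization of a non-unital algebra. -/
lemma le_of_le_of_norm_star_mul_mul_le {β : A} (ha : 0 ≤ a) (hb : 0 ≤ b) (hbβ : b ≤ β)
    (hβ : IsStrictlyPositive β)
    (h : ∀ x z : A, ‖star (x * a * z) * a * (x * a * z)‖ ≤ ‖star (x * a * z) * b * (x * a * z)‖) :
    a ≤ β := by
  set c := β ^ (-(1 / 2) : ℝ)
  have hc : IsSelfAdjoint c := .of_nonneg rpow_nonneg
  have hp : ‖c * b * c‖ ≤ 1 := by
    rw [CStarAlgebra.norm_le_one_iff_of_nonneg _ (conjugate_nonneg_of_nonneg hb rpow_nonneg),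
      ← conjugate_rpow_neg_one_half β]
    exact hc.conjugate_le_conjugate hbβ
  have hconj : ∀ d : A, star (c * c * a * c) * d * (c * c * a * c)
      = (c * a * c) * (c * d * c) * (c * a * c) := by
    intro d
    simp only [star_mul, hc.star_eq, (IsSelfAdjoint.of_nonneg ha).star_eq]
    noncomm_ring
  have hq : IsSelfAdjoint (c * a * c) := .of_nonneg (conjugate_nonneg_of_nonneg ha rpow_nonneg)
  rw [le_iff_norm_rpow_mul_mul_rpow ha hβ]
  refine hq.norm_le_one_of_norm_mul_self_mul_self_le hp ?_
  simpa only [hconj] using h (c * c) c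

lemma le_of_forall_norm_star_mul_mul_le_of_unital (ha : 0 ≤ a) (hb : 0 ≤ b)
    (h : ∀ x z : A, ‖star (x * a * z) * a * (x * a * z)‖ ≤ ‖star (x * a * z) * b * (x * a * z)‖) :
    a ≤ b :=
  le_of_forall_pos_le_add_algebraMap fun _ hε =>
    le_of_le_of_norm_star_mul_mul_le ha hb (le_add_of_nonneg_right (algebraMap_nonneg _ hε.le))
      (IsStrictlyPositive.nonneg_add hb (isStrictlyPositive_algebraMap hε)) h

end CStarAlgebra

lemma le_of_forall_norm_star_mul_mul_le {B : Type*} [NonUnitalCStarAlgebra B] [PartialOrder B]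
    [StarOrderedRing B] {a b : B} (ha : 0 ≤ a) (hb : 0 ≤ b)
    (h : ∀ c : B, ‖star c * a * c‖ ≤ ‖star c * b * c‖) : a ≤ b := by
  rw [← Unitization.inr_le_iff a b (.of_nonneg ha) (.of_nonneg hb)]
  refine le_of_forall_norm_star_mul_mul_le_of_unital (Unitization.inr_nonneg_iff.mpr ha)
    (Unitization.inr_nonneg_iff.mpr hb) fun x z => ?_
  have hfst : (x * (a : Unitization ℂ B) * z).fst = 0 := by simp
  lift x * (a : Unitization ℂ B) * z to B using hfst with c
  simpa only [← Unitization.inr_star, ← Unitization.inr_mul, Unitization.norm_inr] using h c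

namespace RightCStarModule

section

variable {A E F : Type*} [NonUnitalCStarAlgebra A] [PartialOrder A]
  [AddCommGroup E] [Module ℂ E] [SMul Aᵐᵒᵖ E] [Norm E] [RightCStarModule A E]
  [AddCommGroup F] [Module ℂ F] [SMul Aᵐᵒᵖ F] [Norm F] [RightCStarModule A F]

lemma inner_op_smul_left {a : A} {x y : E} : inner A (x <• a) y = star a * inner A x y := by
  rw [← star_inner, inner_op_smul_right, star_mul, star_inner]

lemma inner_add_left {x y z : E} : inner A (x + y) z = inner A x z + inner A y z := by
  rw [← star_inner, inner_add_right, star_add, star_inner, star_inner]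

lemma inner_smul_left_complex {c : ℂ} {x y : E} :
    inner A (c • x) y = star c • inner A x y := by
  rw [← star_inner, inner_smul_right_complex, star_smul, star_inner]

variable (A) in
lemma norm_sq_eq (x : E) : ‖x‖ ^ 2 = ‖inner A x x‖ := by
  rw [norm_eq_sqrt_norm_inner_self (A := A) x, Real.sq_sqrt (norm_nonneg _)]

lemma norm_op_smul_sq (a : A) (x : E) : ‖x <• a‖ ^ 2 = ‖star a * inner A x x * a‖ := by
  rw [norm_sq_eq A, inner_op_smul_left, inner_op_smul_right, mul_assoc]

/-- Polarization: the inner products `⟨x + y, x + y⟩` and `⟨x + i y, x + i y⟩` determine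
`⟨x, y⟩`. -/
lemma inner_map_map_of_inner_map_self (t : E →ₗ[ℂ] F)
    (h : ∀ x : E, inner A (t x) (t x) = inner A x x) (x y : E) :
    inner A (t x) (t y) = inner A x y := by
  have hsym : ∀ x y : E, inner A (t x) (t y) + inner A (t y) (t x)
      = inner A x y + inner A y x := by
    intro x y
    have hxy := h (x + y)
    simp only [map_add, inner_add_left, inner_add_right, h x, h y] at hxy
    linear_combination (norm := abel) hxy
  have hanti : inner A (t x) (t y) - inner A (t y) (t x) = inner A x y - inner A y x := by
    have hxiy := hsym x (Complex.I • y)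
    simp only [map_smul, inner_smul_left_complex, inner_smul_right_complex, Complex.star_def,
      Complex.conj_I, neg_smul, ← sub_eq_add_neg, ← smul_sub] at hxiy
    exact smul_right_injective A Complex.I_ne_zero hxiy
  have h2 : (2 : ℂ) • inner A (t x) (t y) = (2 : ℂ) • inner A x y := by
    rw [two_smul, two_smul]
    linear_combination (norm := abel) hsym x y + hanti
  exact smul_right_injective A two_ne_zero h2

lemma inner_map_self_of_norm_map [StarOrderedRing A] (t : E → F)
    (hmod : ∀ (a : A) (x : E), t (x <• a) = t x <• a) (hiso : ∀ x : E, ‖t x‖ = ‖x‖) (x : E) :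
    inner A (t x) (t x) = inner A x x := by
  have h (c : A) : ‖star c * inner A (t x) (t x) * c‖ = ‖star c * inner A x x * c‖ := by
    rw [← norm_op_smul_sq, ← norm_op_smul_sq, ← hmod, hiso]
  exact le_antisymm (le_of_forall_norm_star_mul_mul_le inner_self_nonneg inner_self_nonneg
    (h · |>.le)) (le_of_forall_norm_star_mul_mul_le inner_self_nonneg inner_self_nonneg
    (h · |>.ge))

end

lemma norm_eq_zero_iff (A : Type*) {E : Type*} [NonUnitalCStarAlgebra A] [PartialOrder A]
    [AddCommGroup E] [Module ℂ E] [SMul Aᵐᵒᵖ E] [Norm E] [RightCStarModule A E] {x : E} :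
    ‖x‖ = 0 ↔ x = 0 := by
  rw [← sq_eq_zero_iff, norm_sq_eq A, norm_eq_zero, inner_self]

lemma injective_of_norm_map (A : Type*) {E F : Type*} [NonUnitalCStarAlgebra A] [PartialOrder A]
    [AddCommGroup E] [Module ℂ E] [SMul Aᵐᵒᵖ E] [Norm E] [RightCStarModule A E]
    [AddCommGroup F] [Module ℂ F] [SMul Aᵐᵒᵖ F] [Norm F] [RightCStarModule A F] (t : E →ₗ[ℂ] F)
    (hiso : ∀ x : E, ‖t x‖ = ‖x‖) : Function.Injective t := by
  refine (injective_iff_map_eq_zero t).mpr fun x hx => ?_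
  rw [← norm_eq_zero_iff A, ← hiso, hx, norm_eq_zero_iff A]

end RightCStarModule

/-- Lance's theorem: a surjective `B`-linear isometry `t : Z → W` between Hilbert
C*-modules over a C*-algebra `B` is unitary: it preserves the `B`-valued inner products
and is adjointable, with adjoint its inverse `s` (so `⟨t z | w⟩ = ⟨z | s w⟩`). -/
theorem stmt_15 {B Z W : Type*}
    [NonUnitalCStarAlgebra B] [PartialOrder B] [StarOrderedRing B]
    [AddCommGroup Z] [Module ℂ Z] [SMul Bᵐᵒᵖ Z] [Norm Z] [RightCStarModule B Z]
    [AddCommGroup W] [Module ℂ W] [SMul Bᵐᵒᵖ W] [Norm W] [RightCStarModule B W]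
    (t : Z →ₗ[ℂ] W)
    (hmod : ∀ (b : B) (z : Z), t (z <• b) = t z <• b)
    (hiso : ∀ z : Z, ‖t z‖ = ‖z‖)
    (hsurj : Function.Surjective t) :
    (∀ z₁ z₂ : Z, (inner B (t z₁) (t z₂) : B) = inner B z₁ z₂) ∧
    ∃ s : W →ₗ[ℂ] Z,
      (∀ w : W, t (s w) = w) ∧
      (∀ z : Z, s (t z) = z) ∧
      (∀ (b : B) (w : W), s (w <• b) = s w <• b) ∧
      ∀ (z : Z) (w : W), (inner B (t z) w : B) = inner B z (s w) := by
  have hinner := RightCStarModule.inner_map_map_of_inner_map_self t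
    (RightCStarModule.inner_map_self_of_norm_map t hmod hiso)
  have hinj := RightCStarModule.injective_of_norm_map B t hiso
  let e : Z ≃ₗ[ℂ] W := .ofBijective t ⟨hinj, hsurj⟩
  have hts : ∀ w : W, t (e.symm w) = w := e.apply_symm_apply
  refine ⟨hinner, e.symm, hts, e.symm_apply_apply, fun b w => hinj ?_, fun z w => ?_⟩
  · simp only [LinearEquiv.coe_coe, hmod, hts]
  · rw [← hinner, LinearEquiv.coe_coe, hts]
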